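/- arXiv:2109.11634 — 2 statements merged into one kernel-verified Lean document; each statement's English description precedes it below -/
import Mathlib

section
/- Let θ, θ̂ ∈ ℝ^{M×p} be matrices whose m-th row θ^(m) ∈ ℝᵖ collects the coefficients of experiment m, let w_{m,m'} ≥ 0 be symmetric weights, and define the fusion penalty P_w(x) = Σ_{1≤m<m'≤M} w_{m,m'} ‖x^(m) − x^(m')‖₁. Let Δ = θ̂ − θ and let S̃ ⊆ {1,…,p} × {1,…,M} be any index set containing all pairs (j,m) for which there exists m' with θ^(m)_j ≠ θ^(m')_j. For an index set A, let Δ_A denote the matrix agreeing with Δ on A and zero elsewhere. Then P_w(θ) − P_w(θ̂) ≤ P_w(Δ_{S̃}) − P_w(Δ_{S̃ᶜ}). -/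
/-- The weighted fusion penalty `P_w(x) = Σ_{m<m'} w_{m,m'} ‖x^(m) − x^(m')‖₁`. -/
noncomputable def fusionPenalty (M p : ℕ) (w : Fin M → Fin M → ℝ)
    (x : Fin M → Fin p → ℝ) : ℝ :=
  ∑ m : Fin M, ∑ m' ∈ Finset.univ.filter (fun m' => m < m'),
    w m m' * (∑ j, |x m j - x m' j|)

/-- The restriction of `Δ` to an index set `A ⊆ {1,…,p} × {1,…,M}`:
it agrees with `Δ` on `A` and is zero elsewhere. -/
noncomputable def restrictIdx (M p : ℕ) (Δ : Fin M → Fin p → ℝ)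
    (A : Finset (Fin p × Fin M)) : Fin M → Fin p → ℝ :=
  fun m j => if (j, m) ∈ A then Δ m j else 0

lemma scalar_key (A B C D : ℝ) (P Q : Prop) [Decidable P] [Decidable Q]
    (h1 : ¬P → A = B) (h2 : ¬Q → A = B) :
    |A - B| - |C - D| ≤
      |(if P then C - A else 0) - (if Q then D - B else 0)|
        - |(if ¬P then C - A else 0) - (if ¬Q then D - B else 0)| := by
  split_ifs with hp hq hq <;> simp only [sub_zero, zero_sub, abs_zero, abs_neg]
  · have h := abs_sub_abs_le_abs_sub (A - B) (C - D)
    have e : |A - B - (C - D)| = |C - A - (D - B)| := by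
      rw [show A - B - (C - D) = -(C - A - (D - B)) by ring, abs_neg]
    linarith
  · have hAB := h2 hq; subst hAB
    simp only [sub_self, abs_zero, zero_sub]
    have h := abs_sub_abs_le_abs_sub (D - A) (C - A)
    have e : C - D = C - A - (D - A) := by ring
    have e2 : |D - A - (C - A)| = |C - A - (D - A)| := abs_sub_comm _ _
    rw [e]
    linarith
  · have hAB := h1 hp; subst hAB
    simp only [sub_self, abs_zero, zero_sub]
    have h := abs_sub_abs_le_abs_sub (C - A) (D - A)
    have e : C - D = C - A - (D - A) := by ring
    rw [e]
    linarith
  · have hAB := h1 hp; subst hAB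
    simp only [sub_self, abs_zero, zero_sub]
    have e : C - D = C - A - (D - A) := by ring
    rw [e]

/-- Decomposability of the fusion penalty over the dissimilarity
set `S̃` (step in the proof of Theorem 1). -/
theorem fusion_penalty_decomposition
    (M p : ℕ)
    (θ θhat : Fin M → Fin p → ℝ)
    (w : Fin M → Fin M → ℝ)
    (hw_nonneg : ∀ m m' : Fin M, m ≠ m' → 0 ≤ w m m')
    (hw_symm : ∀ m m' : Fin M, w m m' = w m' m)
    (Stilde : Finset (Fin p × Fin M))
    (hS : ∀ (j : Fin p) (m : Fin M), (∃ m', θ m j ≠ θ m' j) → (j, m) ∈ Stilde) :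
    fusionPenalty M p w θ - fusionPenalty M p w θhat
      ≤ fusionPenalty M p w (restrictIdx M p (fun m j => θhat m j - θ m j) Stilde)
        - fusionPenalty M p w (restrictIdx M p (fun m j => θhat m j - θ m j) Stildeᶜ) := by
  unfold fusionPenalty restrictIdx
  rw [← Finset.sum_sub_distrib, ← Finset.sum_sub_distrib]
  refine Finset.sum_le_sum fun m _ => ?_
  rw [← Finset.sum_sub_distrib, ← Finset.sum_sub_distrib]
  refine Finset.sum_le_sum fun m' hm' => ?_
  have hlt : m < m' := (Finset.mem_filter.mp hm').2
  have hw : 0 ≤ w m m' := hw_nonneg m m' (ne_of_lt hlt)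
  rw [← mul_sub, ← mul_sub, ← Finset.sum_sub_distrib, ← Finset.sum_sub_distrib]
  refine mul_le_mul_of_nonneg_left (Finset.sum_le_sum fun j _ => ?_) hw
  have key := scalar_key (θ m j) (θ m' j) (θhat m j) (θhat m' j)
      ((j, m) ∈ Stilde) ((j, m') ∈ Stilde)
      (fun h => by
        by_contra hne
        exact h (hS j m ⟨m', hne⟩))
      (fun h => by
        by_contra hne
        exact h (hS j m' ⟨m, Ne.symm hne⟩))
  simpa [Finset.mem_compl] using key
end

section
/- Let Δ, g ∈ ℝᴺ, let S ⊆ {1,…,N}, let a, b ≥ 0 be real numbers, let M ≥ 1 be an integer, and let ρ₂ > 0 with ρ₁ = ρ₂/√M and 2‖g‖_∞ ≤ ρ₁. If 0 ≤ −⟨g, Δ⟩ + ρ₁‖Δ_S‖₁ − ρ₁‖Δ_{Sᶜ}‖₁ + ρ₂·a − ρ₂·b, then (1/√M)‖Δ_{Sᶜ}‖₁ + 2b ≤ (3/√M)‖Δ_S‖₁ + 2a. -/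
/-- Cone membership of the estimation error (proof of Theorem 1):
with the tuning choice `ρ₁ = ρ₂/√M ≥ 2‖g‖_∞`, the basic inequality forces `Δ`
into the restricted cone. -/
theorem cone_membership
    (N M : ℕ) (hM : 1 ≤ M)
    (Δ g : Fin N → ℝ) (S : Finset (Fin N))
    (a b : ℝ) (ha : 0 ≤ a) (hb : 0 ≤ b)
    (ρ₁ ρ₂ : ℝ) (hρ₂ : 0 < ρ₂) (hρ₁ : ρ₁ = ρ₂ / Real.sqrt M)
    (hg : ∀ j, 2 * |g j| ≤ ρ₁)
    (hbasic : 0 ≤ -(∑ j, g j * Δ j) + ρ₁ * (∑ j ∈ S, |Δ j|)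
        - ρ₁ * (∑ j ∈ Sᶜ, |Δ j|) + ρ₂ * a - ρ₂ * b) :
    (1 / Real.sqrt M) * (∑ j ∈ Sᶜ, |Δ j|) + 2 * b
      ≤ (3 / Real.sqrt M) * (∑ j ∈ S, |Δ j|) + 2 * a := by
  have hMpos : (0:ℝ) < Real.sqrt M := Real.sqrt_pos.mpr (by exact_mod_cast hM)
  set s := ∑ j ∈ S, |Δ j| with hs
  set t := ∑ j ∈ Sᶜ, |Δ j| with ht
  have hsum : ∑ j, |Δ j| = s + t := (Finset.sum_add_sum_compl S _).symm
  have hbound : -(∑ j, g j * Δ j) ≤ (ρ₁ / 2) * (s + t) := by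
    have h1 : -(∑ j, g j * Δ j) ≤ ∑ j, |g j * Δ j| := by
      calc -(∑ j, g j * Δ j) ≤ |∑ j, g j * Δ j| := neg_le_abs _
        _ ≤ ∑ j, |g j * Δ j| := Finset.abs_sum_le_sum_abs _ _
    have h2 : ∑ j, |g j * Δ j| ≤ ∑ j, (ρ₁ / 2) * |Δ j| := by
      apply Finset.sum_le_sum
      intro j _
      rw [abs_mul]
      exact mul_le_mul_of_nonneg_right (by linarith [hg j]) (abs_nonneg _)
    calc -(∑ j, g j * Δ j) ≤ ∑ j, (ρ₁ / 2) * |Δ j| := h1.trans h2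
      _ = (ρ₁ / 2) * (s + t) := by rw [← Finset.mul_sum, hsum]
  have key : (ρ₁ / 2) * t + ρ₂ * b ≤ (3 * ρ₁ / 2) * s + ρ₂ * a := by nlinarith
  have hρ₁pos : 0 < ρ₁ := by rw [hρ₁]; positivity
  rw [hρ₁] at key
  have := mul_le_mul_of_nonneg_left key (by positivity : (0:ℝ) ≤ 2 / ρ₂)
  have h2 : (2 / ρ₂) * ((ρ₂ / Real.sqrt M / 2) * t + ρ₂ * b)
      = (1 / Real.sqrt M) * t + 2 * b := by field_simp
  have h3 : (2 / ρ₂) * ((3 * (ρ₂ / Real.sqrt M) / 2) * s + ρ₂ * a)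
      = (3 / Real.sqrt M) * s + 2 * a := by field_simp
  linarith [h2 ▸ h3 ▸ this]
end
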